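/- Assume (B1)–(B3) and fix λ > 0, σ ∈ (0,1), c > 0, z⁻ ∈ H, p⁻ ∈ ℝ^ℓ. Set L^ψ := λ(L_f + L_g‖p⁻‖ + c(B_g^{(0)}L_g + (B_g^{(1)})²)) + 1 and σ' := σ/√(L^ψ). Suppose (z, v, ε) ∈ H × ℝ^n × ℝ_+ satisfies v ∈ ∂_ε(λ L_c(·;p⁻) + (1/2)‖·−z⁻‖²)(z) and ‖v‖² + 2ε ≤ (σ')²‖v + z⁻ − z‖². Define r := v + z⁻ − z, δ := ε/λ, p := Π_{K*}(p⁻ + c g(z)), ẑ := argmin_u {λ(⟨∇f(z) + ∇g(z)p, u−z⟩ + h(u)) − ⟨r, u−z⟩ + (L^ψ/2)‖u−z‖²}, w := (r + L^ψ(z − ẑ))/λ, and ξ := w − ∇f(z) − ∇g(z)p. Then ξ ∈ ∂_δ h(z), ‖r‖ ≤ D_h/(1−σ), δ ≤ (1/(2λ))(σD_h/(1−σ))², and ‖w‖ ≤ (1+σ)D_h/(λ(1−σ)). -/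

import Mathlib

/-!
The inexactness condition gives `‖v‖ ≤ σ‖r‖`, and `r - v = z⁻ - z`, so `‖r‖ ≤ D_h/(1-σ)`.
By Moreau's decomposition `p⁻ + c g(z) - p ∈ -K` and `dist(p⁻ + c g(z), -K) = ‖p‖`, so the penalty
term of `L_c(·; p⁻)` has at `z` a quadratic upper model with slope `∇g(z) p`. Together with the
descent lemmas for `f` and `g`, the `ε`-subgradient inequality at `ẑ` becomes
`M(z) ≤ M(ẑ) + ε` for the `L^ψ`-strongly convex prox-linear model `M` that `ẑ` minimises.
Optimality of `ẑ` makes `ξ` an exact subgradient of `h` at `ẑ` and gives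
`(L^ψ/2)‖ẑ - z‖² ≤ ε`; hence the linearisation gap of `h` between `ẑ` and `z` is at most `ε/λ`,
and `L^ψ‖ẑ - z‖ ≤ σ‖r‖` bounds `‖w‖`.
-/

open RealInnerProductSpace Pointwise

/-- The dual cone of a set in a real inner product space. -/
def dualCone {F : Type*} [NormedAddCommGroup F] [InnerProductSpace ℝ F] (K : Set F) : Set F :=
  {y | ∀ x ∈ K, 0 ≤ ⟪y, x⟫}

/-- `p` is the Euclidean projection of `x` onto `S`. -/
def IsProjOn {F : Type*} [NormedAddCommGroup F] [InnerProductSpace ℝ F]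
    (S : Set F) (x p : F) : Prop :=
  p ∈ S ∧ ∀ y ∈ S, dist x p ≤ dist x y

/-- `g` is `K`-convex. -/
def KConvex {E F : Type*} [NormedAddCommGroup E] [InnerProductSpace ℝ E]
    [NormedAddCommGroup F] [InnerProductSpace ℝ F] (K : Set F) (g : E → F) : Prop :=
  ∀ z z' : E, ∀ t : ℝ, t ∈ Set.Icc (0 : ℝ) 1 →
    g (t • z' + (1 - t) • z) - t • g z' - (1 - t) • g z ∈ -K

/-- The ε-subdifferential at `z` of a proper extended-real-valued function represented by
its effective domain `D` and its real values `ψ` on `D` (the function equals `+∞` off `D`). -/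
def epsSubdiff {E : Type*} [NormedAddCommGroup E] [InnerProductSpace ℝ E]
    (D : Set E) (ψ : E → ℝ) (ε : ℝ) (z : E) : Set E :=
  {u | ∀ z' ∈ D, ψ z + ⟪u, z' - z⟫ - ε ≤ ψ z'}

/-- The augmented Lagrangian `L_c(z;p)`; the proper closed convex function `h` is represented
by its real values on its effective domain `H`. -/
noncomputable def AugLag {E F : Type*} [NormedAddCommGroup E] [InnerProductSpace ℝ E]
    [NormedAddCommGroup F] [InnerProductSpace ℝ F]
    (K : Set F) (f h : E → ℝ) (g : E → F) (c : ℝ) (z : E) (p : F) : ℝ :=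
  f z + h z + (1 / (2 * c)) * ((Metric.infDist (p + c • g z) (-K)) ^ 2 - ‖p‖ ^ 2)

open Set Metric Filter Topology

section Descent

variable {E F : Type*} [NormedAddCommGroup E] [NormedSpace ℝ E]
  [NormedAddCommGroup F] [NormedSpace ℝ F]

theorem Convex.norm_image_sub_sub_fderiv_le {s : Set E} (hs : Convex ℝ s) {g : E → F}
    {g' : E → E →L[ℝ] F} {L : ℝ} (hg : ∀ u ∈ s, HasFDerivAt g (g' u) u) {x y : E}
    (hx : x ∈ s) (hy : y ∈ s) (hlip : ∀ u ∈ s, ‖g' u - g' x‖ ≤ L * ‖u - x‖) :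
    ‖g y - g x - g' x (y - x)‖ ≤ L / 2 * ‖y - x‖ ^ 2 := by
  set d := y - x
  have hseg : ∀ t ∈ Icc (0 : ℝ) 1, x + t • d ∈ s := fun t ht => hs.add_smul_sub_mem hx hy ht
  have hderiv : ∀ t ∈ Icc (0 : ℝ) 1, HasDerivAt (fun t : ℝ => g (x + t • d) - g x - t • g' x d)
      (g' (x + t • d) d - g' x d) t := by
    intro t ht
    have hline : HasDerivAt (fun t : ℝ => x + t • d) d t := by
      simpa using ((hasDerivAt_id t).smul_const d).const_add x
    exact (((hg _ (hseg t ht)).comp_hasDerivAt t hline).sub_const (g x)).sub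
      (by simpa using (hasDerivAt_id t).smul_const (g' x d))
  have hbound : ∀ t ∈ Ico (0 : ℝ) 1, ‖g' (x + t • d) d - g' x d‖ ≤ L * t * ‖d‖ ^ 2 := by
    intro t ht
    calc ‖g' (x + t • d) d - g' x d‖ ≤ ‖g' (x + t • d) - g' x‖ * ‖d‖ :=
          (g' (x + t • d) - g' x).le_opNorm d
      _ ≤ L * ‖t • d‖ * ‖d‖ := by
          gcongr
          simpa using hlip _ (hseg t (Ico_subset_Icc_self ht))
      _ = L * t * ‖d‖ ^ 2 := by rw [norm_smul, Real.norm_of_nonneg ht.1]; ring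
  have hB : ∀ t : ℝ, HasDerivAt (fun t => L / 2 * t ^ 2 * ‖d‖ ^ 2) (L * t * ‖d‖ ^ 2) t := by
    intro t
    refine (((hasDerivAt_pow 2 t).const_mul (L / 2)).mul_const (‖d‖ ^ 2)).congr_deriv ?_
    push_cast
    ring
  have := image_norm_le_of_norm_deriv_right_le_deriv_boundary
    (fun t ht => (hderiv t ht).continuousAt.continuousWithinAt)
    (fun t ht => (hderiv t (Ico_subset_Icc_self ht)).hasDerivWithinAt) (by simp) hB
    hbound (right_mem_Icc.2 zero_le_one)
  simpa [d] using this

end Descent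

theorem Convex.sub_le_inner_gradient_add {E : Type*} [NormedAddCommGroup E]
    [InnerProductSpace ℝ E] [CompleteSpace E] {s : Set E} (hs : Convex ℝ s) {f : E → ℝ}
    {f' : E → E} {L : ℝ} (hf : ∀ u ∈ s, HasGradientAt f (f' u) u) {x y : E} (hx : x ∈ s)
    (hy : y ∈ s) (hlip : ∀ u ∈ s, ‖f' u - f' x‖ ≤ L * ‖u - x‖) :
    f y - f x ≤ ⟪f' x, y - x⟫ + L / 2 * ‖y - x‖ ^ 2 := by
  have := hs.norm_image_sub_sub_fderiv_le (fun u hu => (hf u hu).hasFDerivAt) hx hy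
    (L := L) fun u hu => by simpa [← map_sub] using hlip u hu
  rw [InnerProductSpace.toDual_apply_apply, Real.norm_eq_abs, abs_le] at this
  linarith [this.2]

theorem exists_properCone_coe_eq {F : Type*} [NormedAddCommGroup F] [InnerProductSpace ℝ F]
    {K : Set F} (hKne : K.Nonempty) (hKcl : IsClosed K) (hKcvx : Convex ℝ K)
    (hKcone : ∀ t : ℝ, 0 < t → ∀ x ∈ K, t • x ∈ K) :
    ∃ C : ProperCone ℝ F, (C : Set F) = K := by
  let C : ConvexCone ℝ F :=
    { carrier := K
      smul_mem' := fun t ht x hx => hKcone t ht x hx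
      add_mem' := fun x hx y hy => by
        have hmid := hKcvx hx hy (a := 1 / 2) (b := 1 / 2) (by norm_num) (by norm_num) (by norm_num)
        convert hKcone 2 two_pos _ hmid using 1
        module }
  exact ⟨⟨C.toPointedCone (.of_nonempty_of_isClosed hKne hKcl), hKcl⟩, rfl⟩

section DualCone

variable {F : Type*} [NormedAddCommGroup F] [InnerProductSpace ℝ F]

theorem IsProjOn.inner_sub_sub_nonpos {S : Set F} (hS : Convex ℝ S) {y p : F}
    (hp : IsProjOn S y p) {q : F} (hq : q ∈ S) : ⟪y - p, q - p⟫ ≤ 0 := by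
  have : Nonempty S := ⟨⟨p, hp.1⟩⟩
  refine (norm_eq_iInf_iff_real_inner_le_zero hS hp.1).1 (le_antisymm ?_ ?_) q hq
  · exact le_ciInf fun w => by simpa [dist_eq_norm] using hp.2 w w.2
  · exact ciInf_le ⟨0, forall_mem_range.2 fun w => norm_nonneg _⟩ (⟨p, hp.1⟩ : S)

variable [CompleteSpace F]

theorem coe_innerDual_eq_dualCone (s : Set F) : (ProperCone.innerDual s : Set F) = dualCone s := by
  ext y
  simp [dualCone, real_inner_comm]

theorem convex_dualCone (s : Set F) : Convex ℝ (dualCone s) := by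
  rw [← coe_innerDual_eq_dualCone]
  exact (ProperCone.innerDual s).convex

theorem IsProjOn.inner_sub_self_eq_zero {s : Set F} {y p : F} (hp : IsProjOn (dualCone s) y p) :
    ⟪y - p, p⟫ = 0 := by
  have h0 := hp.inner_sub_sub_nonpos (convex_dualCone s) (q := 0) fun x _ => by simp
  have h2 := hp.inner_sub_sub_nonpos (convex_dualCone s) (q := (2 : ℝ) • p) fun x hx => by
    rw [real_inner_smul_left]
    exact mul_nonneg zero_le_two (hp.1 x hx)
  rw [zero_sub, inner_neg_right] at h0
  rw [show (2 : ℝ) • p - p = p by module] at h2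
  linarith

variable {C : ProperCone ℝ F} {y p : F}

theorem IsProjOn.sub_mem_neg (hp : IsProjOn (dualCone C) y p) : y - p ∈ -(C : Set F) := by
  rw [Set.mem_neg, neg_sub, SetLike.mem_coe, ← ProperCone.innerDual_innerDual C,
    ProperCone.mem_innerDual]
  intro q hq
  rw [coe_innerDual_eq_dualCone] at hq
  have := hp.inner_sub_sub_nonpos (convex_dualCone _) hq
  rw [inner_sub_right, hp.inner_sub_self_eq_zero, sub_zero] at this
  rw [← neg_sub, inner_neg_right, real_inner_comm]
  linarith

theorem IsProjOn.infDist_neg_eq_norm (hp : IsProjOn (dualCone C) y p) :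
    infDist y (-(C : Set F)) = ‖p‖ := by
  refine le_antisymm ?_ ((le_infDist ⟨_, hp.sub_mem_neg⟩).2 fun s hs => ?_)
  · have := infDist_le_dist_of_mem (x := y) hp.sub_mem_neg
    rwa [dist_eq_norm, sub_sub_cancel] at this
  · have hps : 0 ≤ ⟪p, -s⟫ := hp.1 _ hs
    have hsq : ‖y - s‖ ^ 2 = ‖p‖ ^ 2 + 2 * ⟪p, -s⟫ + ‖y - p - s‖ ^ 2 := by
      rw [show y - s = p + (y - p - s) by abel, norm_add_sq_real, sub_eq_add_neg (y - p),
        inner_add_right, real_inner_comm (y - p) p, hp.inner_sub_self_eq_zero, zero_add]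
    rw [dist_eq_norm, ← pow_le_pow_iff_left₀ (norm_nonneg _) (norm_nonneg _) two_ne_zero]
    nlinarith [sq_nonneg ‖y - p - s‖]

theorem IsProjOn.norm_le (hp : IsProjOn (dualCone C) y p) : ‖p‖ ≤ ‖y‖ := by
  rw [← hp.infDist_neg_eq_norm]
  simpa using infDist_le_dist_of_mem (x := y) (show (0 : F) ∈ -(C : Set F) by simp)

end DualCone

theorem infDist_add_smul_sq_sub_le {F : Type*} [NormedAddCommGroup F] [InnerProductSpace ℝ F]
    {S : Set F} {y p : F} (hp : y - p ∈ S) (hy : infDist y S = ‖p‖) {c : ℝ} (hc : 0 < c)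
    (d : F) :
    (infDist (y + c • d) S ^ 2 - infDist y S ^ 2) / (2 * c) ≤ ⟪p, d⟫ + c / 2 * ‖d‖ ^ 2 := by
  have hle : infDist (y + c • d) S ≤ ‖p + c • d‖ := by
    simpa [dist_eq_norm, add_comm] using infDist_le_dist_of_mem (x := y + c • d) hp
  have hsq : ‖p + c • d‖ ^ 2 = ‖p‖ ^ 2 + 2 * c * ⟪p, d⟫ + c ^ 2 * ‖d‖ ^ 2 := by
    rw [norm_add_sq_real, real_inner_smul_right, norm_smul, Real.norm_of_nonneg hc.le]
    ring
  rw [div_le_iff₀ (by positivity), hy]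
  nlinarith [pow_le_pow_left₀ infDist_nonneg hle 2]

section AugmentedLagrangian

variable {E F : Type*} [NormedAddCommGroup E] [InnerProductSpace ℝ E] [CompleteSpace E]
  [NormedAddCommGroup F] [InnerProductSpace ℝ F] [CompleteSpace F]

theorem augLag_penalty_sub_le {C : ProperCone ℝ F} {H : Set E} (hH : Convex ℝ H) {g : E → F}
    {g' : E → E →L[ℝ] F} {Lg Bg1 c : ℝ} {z u : E} {pm p : F}
    (hg : ∀ x ∈ H, HasFDerivAt g (g' x) x) (hglip : ∀ x ∈ H, ‖g' x - g' z‖ ≤ Lg * ‖x - z‖)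
    (hBg1 : ∀ x ∈ H, ‖g' x‖ ≤ Bg1) (hc : 0 < c)
    (hp : IsProjOn (dualCone C) (pm + c • g z) p) (hz : z ∈ H) (hu : u ∈ H) :
    1 / (2 * c) * (infDist (pm + c • g u) (-(C : Set F)) ^ 2 - ‖pm‖ ^ 2)
        - 1 / (2 * c) * (infDist (pm + c • g z) (-(C : Set F)) ^ 2 - ‖pm‖ ^ 2) ≤
      ⟪(g' z).adjoint p, u - z⟫ + (Lg * ‖p‖ + c * Bg1 ^ 2) / 2 * ‖u - z‖ ^ 2 := by
  have hdist := infDist_add_smul_sq_sub_le hp.sub_mem_neg hp.infDist_neg_eq_norm hc (g u - g z)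
  rw [show pm + c • g z + c • (g u - g z) = pm + c • g u by rw [smul_sub]; abel] at hdist
  have hlin : ⟪p, g u - g z⟫ ≤ ⟪(g' z).adjoint p, u - z⟫ + ‖p‖ * (Lg / 2 * ‖u - z‖ ^ 2) := by
    rw [ContinuousLinearMap.adjoint_inner_left,
      show g u - g z = g' z (u - z) + (g u - g z - g' z (u - z)) by abel, inner_add_right]
    gcongr
    exact (real_inner_le_norm _ _).trans
      (mul_le_mul_of_nonneg_left (hH.norm_image_sub_sub_fderiv_le hg hz hu hglip) (norm_nonneg p))
  have hquad : ‖g u - g z‖ ^ 2 ≤ Bg1 ^ 2 * ‖u - z‖ ^ 2 := by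
    rw [← mul_pow]
    exact pow_le_pow_left₀ (norm_nonneg _)
      (hH.norm_image_sub_le_of_norm_hasFDerivWithin_le (fun x hx => (hg x hx).hasFDerivWithinAt)
        hBg1 hz hu) 2
  have hc2 : c / 2 * ‖g u - g z‖ ^ 2 ≤ c / 2 * (Bg1 ^ 2 * ‖u - z‖ ^ 2) := by gcongr
  rw [← mul_sub, sub_sub_sub_cancel_right, one_div_mul_eq_div]
  linarith

theorem augLag_sub_le {C : ProperCone ℝ F} {H : Set E} (hH : Convex ℝ H) {f h : E → ℝ}
    {f' : E → E} {g : E → F} {g' : E → E →L[ℝ] F} {Lf Lg Bg0 Bg1 c : ℝ} {z u : E} {pm p : F}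
    (hf : ∀ x ∈ H, HasGradientAt f (f' x) x) (hflip : ∀ x ∈ H, ‖f' x - f' z‖ ≤ Lf * ‖x - z‖)
    (hg : ∀ x ∈ H, HasFDerivAt g (g' x) x) (hglip : ∀ x ∈ H, ‖g' x - g' z‖ ≤ Lg * ‖x - z‖)
    (hLg : 0 ≤ Lg) (hBg0 : ‖g z‖ ≤ Bg0) (hBg1 : ∀ x ∈ H, ‖g' x‖ ≤ Bg1) (hc : 0 < c)
    (hp : IsProjOn (dualCone C) (pm + c • g z) p) (hz : z ∈ H) (hu : u ∈ H) :
    AugLag C f h g c u pm - AugLag C f h g c z pm ≤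
      ⟪f' z + (g' z).adjoint p, u - z⟫ + (h u - h z)
        + (Lf + Lg * ‖pm‖ + c * (Bg0 * Lg + Bg1 ^ 2)) / 2 * ‖u - z‖ ^ 2 := by
  have hfu := hH.sub_le_inner_gradient_add hf hz hu hflip
  have hpen := augLag_penalty_sub_le hH hg hglip hBg1 hc hp hz hu
  have hpnorm : ‖p‖ ≤ ‖pm‖ + c * Bg0 := by
    refine hp.norm_le.trans ((norm_add_le _ _).trans ?_)
    rw [norm_smul, Real.norm_of_nonneg hc.le]
    gcongr
  have : Lg * ‖p‖ * ‖u - z‖ ^ 2 ≤ Lg * (‖pm‖ + c * Bg0) * ‖u - z‖ ^ 2 := by gcongr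
  simp only [AugLag]
  rw [inner_add_left]
  linarith

end AugmentedLagrangian

section Prox

variable {E : Type*} [NormedAddCommGroup E] [InnerProductSpace ℝ E]

theorem le_add_of_mem_epsSubdiff_prox {H : Set E} {Φ h : E → ℝ} {lam C ε : ℝ} {q z zm v : E}
    (hlam : 0 ≤ lam) (hv : v ∈ epsSubdiff H (fun u => lam * Φ u + 1 / 2 * ‖u - zm‖ ^ 2) ε z)
    (hΦ : ∀ u ∈ H, Φ u - Φ z ≤ ⟪q, u - z⟫ + (h u - h z) + C / 2 * ‖u - z‖ ^ 2) {u : E}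
    (hu : u ∈ H) : lam * h z ≤
      lam * (⟪q, u - z⟫ + h u) - ⟪v + zm - z, u - z⟫ + (lam * C + 1) / 2 * ‖u - z‖ ^ 2 + ε := by
  have hvu := hv u hu
  have hΦu := mul_le_mul_of_nonneg_left (hΦ u hu) hlam
  have hsq : ‖u - zm‖ ^ 2 = ‖z - zm‖ ^ 2 + 2 * ⟪z - zm, u - z⟫ + ‖u - z‖ ^ 2 := by
    rw [show u - zm = (z - zm) + (u - z) by abel, norm_add_sq_real]
  rw [show v + zm - z = v - (z - zm) by abel, inner_sub_left]
  simp only at hvu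
  linarith

theorem ConvexOn.add_inner_le_of_isMinOn {s : Set E} {φ : E → ℝ} (hφ : ConvexOn ℝ s φ) {L : ℝ}
    {z x : E} (hmin : IsMinOn (fun u => φ u + L / 2 * ‖u - z‖ ^ 2) s x) (hx : x ∈ s) {u : E}
    (hu : u ∈ s) : φ x + L * ⟪z - x, u - x⟫ ≤ φ u := by
  have key : ∀ t ∈ Ioo (0 : ℝ) 1,
      φ x + L * ⟪z - x, u - x⟫ ≤ φ u + t * (L / 2 * ‖u - x‖ ^ 2) := by
    intro t ⟨ht0, ht1⟩
    have hmem := hφ.1 hx hu (sub_nonneg.2 ht1.le) ht0.le (by ring)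
    have hconv := hφ.2 hx hu (sub_nonneg.2 ht1.le) ht0.le (by ring)
    have hm := isMinOn_iff.1 hmin _ hmem
    have hsq : ‖(1 - t) • x + t • u - z‖ ^ 2
        = ‖x - z‖ ^ 2 - 2 * t * ⟪z - x, u - x⟫ + t ^ 2 * ‖u - x‖ ^ 2 := by
      rw [show (1 - t) • x + t • u - z = -((z - x) - t • (u - x)) by module, norm_neg,
        norm_sub_sq_real, real_inner_smul_right, norm_smul, Real.norm_of_nonneg ht0.le]
      rw [norm_sub_rev z x]
      ring
    simp only [smul_eq_mul] at hconv hm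
    rw [hsq] at hm
    refine le_of_mul_le_mul_left ?_ ht0
    linarith
  have hlim : Tendsto (fun t => φ u + t * (L / 2 * ‖u - x‖ ^ 2)) (𝓝[>] 0) (𝓝 (φ u)) :=
    tendsto_nhdsWithin_of_tendsto_nhds (Continuous.tendsto' (by fun_prop) _ _ (by simp))
  exact ge_of_tendsto hlim (Filter.mem_of_superset (Ioo_mem_nhdsGT one_pos) key)

theorem mem_epsSubdiff_of_linearization_le {D : Set E} {h : E → ℝ} {ξ x y : E} {ε δ : ℝ}
    (hξ : ξ ∈ epsSubdiff D h ε x) (hδ : ε + (h y - h x - ⟪ξ, y - x⟫) ≤ δ) :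
    ξ ∈ epsSubdiff D h δ y := by
  intro u hu
  have hsplit : ⟪ξ, u - y⟫ = ⟪ξ, u - x⟫ - ⟪ξ, y - x⟫ := by
    rw [← inner_sub_right, sub_sub_sub_cancel_right]
  linarith [hξ u hu]

theorem ConvexOn.proxLinear_mem_epsSubdiff_and_step_le {H : Set E} {h : E → ℝ}
    (hh : ConvexOn ℝ H h) {lam L ε : ℝ} (hlam : 0 < lam) (hL : 0 ≤ L) {q r z zhat : E}
    (hz : z ∈ H) (hzhat : zhat ∈ H)
    (hmin : ∀ u ∈ H, lam * (⟪q, zhat - z⟫ + h zhat) - ⟪r, zhat - z⟫ + L / 2 * ‖zhat - z‖ ^ 2 ≤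
      lam * (⟪q, u - z⟫ + h u) - ⟪r, u - z⟫ + L / 2 * ‖u - z‖ ^ 2)
    (hmodel : lam * h z ≤
      lam * (⟪q, zhat - z⟫ + h zhat) - ⟪r, zhat - z⟫ + L / 2 * ‖zhat - z‖ ^ 2 + ε) :
    (1 / lam) • (r + L • (z - zhat)) - q ∈ epsSubdiff H h (ε / lam) z ∧
      L / 2 * ‖zhat - z‖ ^ 2 ≤ ε := by
  set φ : E → ℝ := fun u => lam * (⟪q, u - z⟫ + h u) - ⟪r, u - z⟫
  have hφ : ConvexOn ℝ H φ := by
    have hlin : ConvexOn ℝ H fun u => ⟪lam • q - r, u⟫ := (innerₗ E (lam • q - r)).convexOn hh.1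
    refine ((hh.smul hlam.le).add (hlin.add_const (-⟪lam • q - r, z⟫))).congr fun u _ => ?_
    simp only [φ, Pi.add_apply, smul_eq_mul, inner_sub_left, inner_sub_right,
      real_inner_smul_left]
    ring
  have hsub : ∀ u ∈ H, φ zhat + L * ⟪z - zhat, u - zhat⟫ ≤ φ u := fun u hu =>
    hφ.add_inner_le_of_isMinOn (isMinOn_iff.2 hmin) hzhat hu
  set ξ := (1 / lam) • (r + L • (z - zhat)) - q
  have hξ : ∀ y, lam * ⟪ξ, y⟫ = ⟪r, y⟫ + L * ⟪z - zhat, y⟫ - lam * ⟪q, y⟫ := by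
    intro y
    simp only [ξ, inner_sub_left, inner_add_left, real_inner_smul_left]
    field_simp
  have hφsub : ∀ u, φ u - φ zhat = lam * ⟪q, u - zhat⟫ + lam * (h u - h zhat) - ⟪r, u - zhat⟫ := by
    intro u
    simp only [φ, show u - z = (u - zhat) + (zhat - z) by abel, inner_add_right]
    ring
  have hz' := hsub z hz
  rw [real_inner_self_eq_norm_sq, norm_sub_rev] at hz'
  have hdist : L / 2 * ‖zhat - z‖ ^ 2 ≤ ε := by
    simp only [φ, sub_self, inner_zero_right, zero_add] at hz' hmodel
    linarith
  refine ⟨mem_epsSubdiff_of_linearization_le (ε := 0) (x := zhat) (fun u hu => ?_) ?_, hdist⟩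
  · refine le_of_mul_le_mul_left ?_ hlam
    linarith [hsub u hu, hξ (u - zhat), hφsub u]
  · rw [zero_add, le_div_iff₀ hlam]
    have hφz := hφsub z
    have hξz := hξ (z - zhat)
    simp only [φ, sub_self, inner_zero_right, zero_add] at hφz
    rw [real_inner_self_eq_norm_sq, norm_sub_rev] at hξz
    linarith [mul_nonneg hL (sq_nonneg ‖zhat - z‖)]

end Prox

theorem le_mul_and_two_mul_le_of_sq_add_le {a b σ L ε : ℝ} (hb : 0 ≤ b) (hσ : 0 ≤ σ)
    (hL : 1 ≤ L) (hε : 0 ≤ ε) (h : a ^ 2 + 2 * ε ≤ σ ^ 2 / L * b ^ 2) :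
    a ≤ σ * b ∧ 2 * ε ≤ (σ * b) ^ 2 / L := by
  have hL' : σ ^ 2 / L * b ^ 2 ≤ (σ * b) ^ 2 := by
    rw [mul_pow]
    gcongr
    exact div_le_self (sq_nonneg σ) hL
  refine ⟨abs_le_of_sq_le_sq' (by linarith) (by positivity) |>.2, ?_⟩
  rw [mul_pow, mul_div_right_comm]
  linarith [sq_nonneg a]

theorem mul_le_of_half_mul_sq_le {L d ε s : ℝ} (hL : 0 < L) (hd : 0 ≤ d) (hs : 0 ≤ s)
    (hdε : L / 2 * d ^ 2 ≤ ε) (hεs : 2 * ε ≤ s ^ 2 / L) : L * d ≤ s := by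
  rw [le_div_iff₀ hL] at hεs
  refine (pow_le_pow_iff_left₀ (by positivity) hs two_ne_zero).1 ?_
  nlinarith

theorem norm_add_le_div_one_sub {E : Type*} [SeminormedAddCommGroup E] {v d : E} {σ D : ℝ}
    (hσ : σ < 1) (hd : ‖d‖ ≤ D) (hv : ‖v‖ ≤ σ * ‖v + d‖) : ‖v + d‖ ≤ D / (1 - σ) := by
  rw [le_div_iff₀ (sub_pos.2 hσ)]
  linarith [norm_add_le v d]

theorem residual_bounds_general
    {E F : Type*}
    [NormedAddCommGroup E] [InnerProductSpace ℝ E] [FiniteDimensional ℝ E]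
    [NormedAddCommGroup F] [InnerProductSpace ℝ F] [FiniteDimensional ℝ F]
    -- K is a nonempty closed convex cone
    (K : Set F) (hKne : K.Nonempty) (hKcl : IsClosed K) (hKcvx : Convex ℝ K)
    (hKcone : ∀ t : ℝ, 0 < t → ∀ x ∈ K, t • x ∈ K)
    -- (B1): h proper closed convex, K_h-Lipschitz on its compact domain H of diameter ≤ Dh
    (H : Set E) (h : E → ℝ) (Dh : ℝ)
    (hHcvx : Convex ℝ H)
    (hhcvx : ConvexOn ℝ H h)
    (hDh : ∀ x ∈ H, ∀ y ∈ H, ‖x - y‖ ≤ Dh)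
    -- (B2): f differentiable on H with lower curvature m_f and L_f-Lipschitz gradient
    (f : E → ℝ) (f' : E → E) (Lf : ℝ) (hLf : 0 < Lf)
    (hfdiff : ∀ z ∈ H, HasGradientAt f (f' z) z)
    (hflip : ∀ z ∈ H, ∀ z' ∈ H, ‖f' z' - f' z‖ ≤ Lf * ‖z' - z‖)
    -- (B3): g K-convex and differentiable with L_g-Lipschitz derivative
    (g : E → F) (g' : E → (E →L[ℝ] F)) (Lg : ℝ) (hLg : 0 < Lg)
    (hgdiff : ∀ z, HasFDerivAt g (g' z) z)
    (hglip : ∀ z z' : E, ‖g' z' - g' z‖ ≤ Lg * ‖z' - z‖)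
    -- bounds B_g⁽⁰⁾ and B_g⁽¹⁾
    (Bg0 Bg1 : ℝ) (hBg0 : ∀ z ∈ H, ‖g z‖ ≤ Bg0) (hBg1 : ∀ z ∈ H, ‖g' z‖ ≤ Bg1)
    -- data of the prox subproblem
    (lam σ c : ℝ) (hlam : 0 < lam) (hσ0 : 0 < σ) (hσ1 : σ < 1) (hc : 0 < c)
    (zm : E) (hzm : zm ∈ H) (pm : F)
    (Lψ : ℝ) (hLψ : Lψ = lam * (Lf + Lg * ‖pm‖ + c * (Bg0 * Lg + Bg1 ^ 2)) + 1)
    (σ' : ℝ) (hσ' : σ' = σ / Real.sqrt Lψ)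
    -- the inexact solution (z, v, ε) of the prox subproblem
    (z : E) (hz : z ∈ H) (v : E) (ε : ℝ) (hε : 0 ≤ ε)
    (hv : v ∈ epsSubdiff H
      (fun u => lam * AugLag K f h g c u pm + (1 / 2) * ‖u - zm‖ ^ 2) ε z)
    (hvineq : ‖v‖ ^ 2 + 2 * ε ≤ σ' ^ 2 * ‖v + zm - z‖ ^ 2)
    -- refined quantities
    (r : E) (hr : r = v + zm - z)
    (δ : ℝ) (hδ : δ = ε / lam)
    (p : F) (hp : IsProjOn (dualCone K) (pm + c • g z) p)
    (zhat : E) (hzhatH : zhat ∈ H)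
    (hzhatmin : ∀ u ∈ H,
      lam * (⟪f' z + (g' z).adjoint p, zhat - z⟫ + h zhat) - ⟪r, zhat - z⟫
          + (Lψ / 2) * ‖zhat - z‖ ^ 2 ≤
        lam * (⟪f' z + (g' z).adjoint p, u - z⟫ + h u) - ⟪r, u - z⟫
          + (Lψ / 2) * ‖u - z‖ ^ 2)
    (w : E) (hw : w = (1 / lam) • (r + Lψ • (z - zhat)))
    (ξ : E) (hξ : ξ = w - f' z - (g' z).adjoint p) :
    -- conclusions
    ξ ∈ epsSubdiff H h δ z ∧
    ‖r‖ ≤ Dh / (1 - σ) ∧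
    δ ≤ (1 / (2 * lam)) * (σ * Dh / (1 - σ)) ^ 2 ∧
    ‖w‖ ≤ (1 + σ) * Dh / (lam * (1 - σ)) := by
  obtain ⟨C, rfl⟩ := exists_properCone_coe_eq hKne hKcl hKcvx hKcone
  have hLψ1 : 1 ≤ Lψ := by
    have := (norm_nonneg _).trans (hBg0 z hz)
    rw [hLψ, le_add_iff_nonneg_left]
    positivity
  have hvr : ‖v‖ ^ 2 + 2 * ε ≤ σ ^ 2 / Lψ * ‖r‖ ^ 2 := by
    rwa [hσ', div_pow, Real.sq_sqrt (by linarith), ← hr] at hvineq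
  obtain ⟨hvσ, hεr⟩ := le_mul_and_two_mul_le_of_sq_add_le (norm_nonneg r) hσ0.le hLψ1 hε hvr
  have hrD : ‖r‖ ≤ Dh / (1 - σ) := by
    rw [hr, add_sub_assoc] at hvσ ⊢
    exact norm_add_le_div_one_sub hσ1 (hDh zm hzm z hz) hvσ
  have hmodel := le_add_of_mem_epsSubdiff_prox hlam.le hv (fun u hu =>
    augLag_sub_le hHcvx hfdiff (fun x hx => hflip z hz x hx) (fun x _ => hgdiff x)
      (fun x _ => hglip z x) hLg.le (hBg0 z hz) hBg1 hc hp hz hu) hzhatH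
  rw [← hr, ← hLψ] at hmodel
  obtain ⟨hξmem, hstep⟩ :=
    hhcvx.proxLinear_mem_epsSubdiff_and_step_le hlam (by linarith) hz hzhatH hzhatmin hmodel
  have hσrD : σ * ‖r‖ ≤ σ * Dh / (1 - σ) := by
    rw [mul_div_assoc]
    exact mul_le_mul_of_nonneg_left hrD hσ0.le
  refine ⟨by rwa [hξ, sub_sub, hw, hδ], hrD, ?_, ?_⟩
  · rw [hδ, show 1 / (2 * lam) * (σ * Dh / (1 - σ)) ^ 2 = (σ * Dh / (1 - σ)) ^ 2 / 2 / lam by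
      ring]
    gcongr
    have := div_le_self (sq_nonneg (σ * ‖r‖)) hLψ1
    nlinarith [pow_le_pow_left₀ (by positivity) hσrD 2]
  · have hLz := mul_le_of_half_mul_sq_le (by linarith) (norm_nonneg _) (by positivity) hstep hεr
    calc ‖w‖ ≤ 1 / lam * (‖r‖ + Lψ * ‖zhat - z‖) := by
          rw [hw, norm_smul, Real.norm_of_nonneg (by positivity), norm_sub_rev zhat]
          gcongr
          exact (norm_add_le _ _).trans_eq (by rw [norm_smul, Real.norm_of_nonneg (by linarith)])
      _ ≤ 1 / lam * (Dh / (1 - σ) + σ * Dh / (1 - σ)) := by gcongr; linarith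
      _ = (1 + σ) * Dh / (lam * (1 - σ)) := by field_simp

/-- key inclusion and residual bounds for one NL-IAPIAL prox step
(Lemma 4.1 of the paper). -/
theorem residual_bounds
    {E F : Type*}
    [NormedAddCommGroup E] [InnerProductSpace ℝ E] [FiniteDimensional ℝ E]
    [NormedAddCommGroup F] [InnerProductSpace ℝ F] [FiniteDimensional ℝ F]
    -- K is a nonempty closed convex cone
    (K : Set F) (hKne : K.Nonempty) (hKcl : IsClosed K) (hKcvx : Convex ℝ K)
    (hKcone : ∀ t : ℝ, 0 < t → ∀ x ∈ K, t • x ∈ K)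
    -- (B1): h proper closed convex, K_h-Lipschitz on its compact domain H of diameter ≤ Dh
    (H : Set E) (h : E → ℝ) (Kh Dh : ℝ) (hKh : 0 < Kh) (hDh0 : 0 < Dh)
    (hHne : H.Nonempty) (hHcpt : IsCompact H) (hHcvx : Convex ℝ H)
    (hhcvx : ConvexOn ℝ H h)
    (hhlip : ∀ x ∈ H, ∀ y ∈ H, |h x - h y| ≤ Kh * ‖x - y‖)
    (hDh : ∀ x ∈ H, ∀ y ∈ H, ‖x - y‖ ≤ Dh)
    -- (B2): f differentiable on H with lower curvature m_f and L_f-Lipschitz gradient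
    (f : E → ℝ) (f' : E → E) (mf Lf : ℝ) (hmf : 0 < mf) (hLf : 0 < Lf)
    (hfdiff : ∀ z ∈ H, HasGradientAt f (f' z) z)
    (hflow : ∀ z ∈ H, ∀ z' ∈ H, -(mf / 2) * ‖z' - z‖ ^ 2 ≤ f z' - f z - ⟪f' z, z' - z⟫)
    (hflip : ∀ z ∈ H, ∀ z' ∈ H, ‖f' z' - f' z‖ ≤ Lf * ‖z' - z‖)
    -- (B3): g K-convex and differentiable with L_g-Lipschitz derivative
    (g : E → F) (g' : E → (E →L[ℝ] F)) (Lg : ℝ) (hLg : 0 < Lg)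
    (hgdiff : ∀ z, HasFDerivAt g (g' z) z) (hgK : KConvex K g)
    (hglip : ∀ z z' : E, ‖g' z' - g' z‖ ≤ Lg * ‖z' - z‖)
    -- bounds B_g⁽⁰⁾ and B_g⁽¹⁾
    (Bg0 Bg1 : ℝ) (hBg0 : ∀ z ∈ H, ‖g z‖ ≤ Bg0) (hBg1 : ∀ z ∈ H, ‖g' z‖ ≤ Bg1)
    -- data of the prox subproblem
    (lam σ c : ℝ) (hlam : 0 < lam) (hσ0 : 0 < σ) (hσ1 : σ < 1) (hc : 0 < c)
    (zm : E) (hzm : zm ∈ H) (pm : F)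
    (Lψ : ℝ) (hLψ : Lψ = lam * (Lf + Lg * ‖pm‖ + c * (Bg0 * Lg + Bg1 ^ 2)) + 1)
    (σ' : ℝ) (hσ' : σ' = σ / Real.sqrt Lψ)
    -- the inexact solution (z, v, ε) of the prox subproblem
    (z : E) (hz : z ∈ H) (v : E) (ε : ℝ) (hε : 0 ≤ ε)
    (hv : v ∈ epsSubdiff H
      (fun u => lam * AugLag K f h g c u pm + (1 / 2) * ‖u - zm‖ ^ 2) ε z)
    (hvineq : ‖v‖ ^ 2 + 2 * ε ≤ σ' ^ 2 * ‖v + zm - z‖ ^ 2)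
    -- refined quantities
    (r : E) (hr : r = v + zm - z)
    (δ : ℝ) (hδ : δ = ε / lam)
    (p : F) (hp : IsProjOn (dualCone K) (pm + c • g z) p)
    (zhat : E) (hzhatH : zhat ∈ H)
    (hzhatmin : ∀ u ∈ H,
      lam * (⟪f' z + (g' z).adjoint p, zhat - z⟫ + h zhat) - ⟪r, zhat - z⟫
          + (Lψ / 2) * ‖zhat - z‖ ^ 2 ≤
        lam * (⟪f' z + (g' z).adjoint p, u - z⟫ + h u) - ⟪r, u - z⟫
          + (Lψ / 2) * ‖u - z‖ ^ 2)
    (w : E) (hw : w = (1 / lam) • (r + Lψ • (z - zhat)))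
    (ξ : E) (hξ : ξ = w - f' z - (g' z).adjoint p) :
    -- conclusions
    ξ ∈ epsSubdiff H h δ z ∧
    ‖r‖ ≤ Dh / (1 - σ) ∧
    δ ≤ (1 / (2 * lam)) * (σ * Dh / (1 - σ)) ^ 2 ∧
    ‖w‖ ≤ (1 + σ) * Dh / (lam * (1 - σ)) :=
  residual_bounds_general K hKne hKcl hKcvx hKcone H h Dh hHcvx hhcvx hDh f f' Lf hLf hfdiff hflip g
    g' Lg hLg hgdiff hglip Bg0 Bg1 hBg0 hBg1 lam σ c hlam hσ0 hσ1 hc zm hzm pm Lψ hLψ σ' hσ' z hz v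
    ε hε hv hvineq r hr δ hδ p hp zhat hzhatH hzhatmin w hw ξ hξ
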